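/- The characteristic polynomial of the poset Π^β_n of pointed partitions of type β (type-B partitions with no pointed element in the zero block, all other blocks pointed in opposite pairs) equals (x-1)·(x-(2n+1))^(n-1), with constant term (-1)^n·(2n+1)^(n-1). -/

import Mathlib

open scoped Classical
open Finset

/-- Negation on the ground set `{±1,…,±n}`, encoded as `Fin n × Bool`. -/
abbrev negE {n : ℕ} (x : Fin n × Bool) : Fin n × Bool := (x.1, !x.2)

/-- The poset `Π^β_n` of pointed partitions of type `β`: type-`B_n` partitions with no
pointed element in the zero block and opposite pairs of pointed elements in the other
(paired) blocks.  Encoding: `f x = none` iff `x` lies in the zero block, and otherwise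
`f x = some p` where `p` is the pointed element of the block of `x`; the conditions say
that pointed elements are pointed in their own block and that `f` is equivariant for
negation (so blocks come in opposite pairs with opposite pointed elements, and the zero
block is self-opposite). -/
abbrev PtdPartBeta (n : ℕ) :=
  {f : Fin n × Bool → Option (Fin n × Bool) //
    (∀ x p, f x = some p → f p = some p) ∧ ∀ x, f (negE x) = (f x).map negE}

/-- The order: `a ≤ b` iff the partition of `a` refines that of `b`
and every pointed element of `b` is pointed in `a`. -/
def PtdPartBeta.le {n : ℕ} (a b : PtdPartBeta n) : Prop :=
  (∀ x, a.1 x = none → b.1 x = none) ∧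
  (∀ x p, a.1 x = some p → b.1 x = b.1 p) ∧
  (∀ p, b.1 p = some p → a.1 p = some p)

/-- The minimal element: empty zero block, all other blocks pointed singletons. -/
def PtdPartBeta.bot (n : ℕ) : PtdPartBeta n :=
  ⟨fun x => some x, ⟨fun _ _ _ => rfl, fun _ => rfl⟩⟩

/-- The maximal element: everything in the (unpointed) zero block. -/
def PtdPartBeta.top (n : ℕ) : PtdPartBeta n :=
  ⟨fun _ => none, ⟨fun _ _ h => by simp at h, fun _ => rfl⟩⟩

/-- The number of pairs of opposite (non-zero) blocks. -/
noncomputable def PtdPartBeta.pairs {n : ℕ} (f : Fin n × Bool → Option (Fin n × Bool)) : ℕ :=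
  (univ.filter fun x => f x = some x).card / 2

/-!
Write `χ_j(x) = (x - 1)(x - 2j - 1)^(j - 1)` (and `χ_0 = 1`); this is `abelCoeff (x - 1) 2 j`.
Above a pointed partition `π` with `k` pointed pairs, the elements `b ≥ π` whose pointed pairs
are indexed by `I` are obtained by sending each of the `k - |I|` other pairs of `π` either to the
zero block or into one of the `2|I|` signed blocks indexed by `I`; there are
`(2|I| + 1)^(k - |I|)` of them. Abel's identity
`∑_j C(k, j) (2j + 1)^(k - j) χ_j(x) = x^k` therefore reads `∑_{b ≥ π} χ_{pairs b} = x^{pairs π}`,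
and Möbius inversion turns this into `∑_π μ(0̂, π) x^{pairs π} = χ_{pairs 0̂} = χ_n`.
Evaluating at `x = 0` gives `μ(0̂, 1̂)`.
-/

section Abel

open Polynomial

variable {R : Type*} [CommRing R]

def abelCoeff (x z : R) (j : ℕ) : R :=
  if j = 0 then 1 else x * (x - j * z) ^ (j - 1)

noncomputable def abelPoly (x z : R) (k : ℕ) : R[X] :=
  ∑ j ∈ range (k + 1), C (k.choose j * abelCoeff x z j) * (X + C (j * z)) ^ (k - j)

theorem derivative_abelPoly_succ (x z : R) (k : ℕ) :
    derivative (abelPoly x z (k + 1)) = C ((k + 1 : ℕ) : R) * abelPoly x z k := by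
  rw [abelPoly, derivative_sum, sum_range_succ, Nat.sub_self, pow_zero, mul_one, derivative_C,
    add_zero, abelPoly, mul_sum]
  refine sum_congr rfl fun j hj => ?_
  have hjk : j ≤ k := Nat.lt_succ_iff.mp (mem_range.mp hj)
  have hchoose :
      ((k + 1).choose j : R) * ((k + 1 - j : ℕ) : R) = ((k + 1 : ℕ) : R) * k.choose j := by
    have h := congr_arg (Nat.cast : ℕ → R) (Nat.choose_mul_succ_eq k j)
    rw [Nat.cast_mul, Nat.cast_mul] at h
    rw [mul_comm ((k + 1 : ℕ) : R), h]
  rw [derivative_C_mul, derivative_X_add_C_pow, show k + 1 - j - 1 = k - j by omega,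
    ← mul_assoc, ← C_mul, ← mul_assoc, ← C_mul]
  congr 2
  linear_combination abelCoeff x z j * hchoose

/-- At `X = -x` the `j`-th term is `(-1)^(k+1-j) C(k+1, j) x (x - j z)^k`, so the sum is a
`(k+1)`-st forward difference of a polynomial of degree `k` in `j`. -/
theorem abelPoly_succ_eval_neg (x z : R) (k : ℕ) : (abelPoly x z (k + 1)).eval (-x) = 0 := by
  have hdeg : (C x * (C x - X * C z) ^ k).natDegree < k + 1 := by
    refine Nat.lt_succ_of_le ?_
    compute_degree
  have h := congr_fun (fwdDiff_iter_eq_zero_of_degree_lt hdeg) 0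
  rw [fwdDiff_iter_eq_sum_shift, Pi.zero_apply] at h
  rw [← h, abelPoly, eval_finsetSum]
  refine sum_congr rfl fun j hj => ?_
  simp only [eval_mul, eval_pow, eval_add, eval_sub, eval_C, eval_X, zero_add, nsmul_eq_mul,
    mul_one, zsmul_eq_mul, Int.cast_mul, Int.cast_pow, Int.cast_neg, Int.cast_one, Int.cast_natCast]
  rcases j with _ | i
  · simp only [abelCoeff, if_pos, Nat.choose_zero_right, Nat.cast_one, Nat.cast_zero, zero_mul,
      add_zero, sub_zero, Nat.sub_zero, neg_pow x]
    ring
  · have hik : i ≤ k := by have := mem_range.mp hj; omega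
    obtain ⟨m, rfl⟩ := Nat.exists_eq_add_of_le hik
    rw [abelCoeff, if_neg (Nat.succ_ne_zero i), Nat.add_sub_cancel,
      show i + m + 1 - (i + 1) = m by omega, show -x + ((i + 1 : ℕ) : R) * z = -(x - ((i + 1 : ℕ) : R) * z) by ring, neg_pow]
    ring

/-- Both sides satisfy `P_(k+1)' = (k+1) P_k` and vanish at `-x`. -/
theorem abelPoly_eq [IsAddTorsionFree R] (x z : R) (k : ℕ) : abelPoly x z k = (X + C x) ^ k := by
  induction k with
  | zero => simp [abelPoly, abelCoeff]
  | succ k ih =>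
    have hderiv : derivative (abelPoly x z (k + 1) - (X + C x) ^ (k + 1)) = 0 := by
      rw [derivative_sub, derivative_abelPoly_succ, ih, derivative_X_add_C_pow, Nat.add_sub_cancel,
        sub_self]
    have hroot : (abelPoly x z (k + 1) - (X + C x) ^ (k + 1)).eval (-x) = 0 := by
      simp [abelPoly_succ_eval_neg]
    have hconst := eq_C_of_derivative_eq_zero hderiv
    rw [hconst, eval_C] at hroot
    rw [hroot, map_zero] at hconst
    exact sub_eq_zero.mp hconst

theorem sum_choose_mul_abelCoeff [IsAddTorsionFree R] (x y z : R) (k : ℕ) :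
    ∑ j ∈ range (k + 1), k.choose j * abelCoeff x z j * (y + j * z) ^ (k - j) = (y + x) ^ k := by
  have h := congr_arg (eval y) (abelPoly_eq x z k)
  simp only [abelPoly, eval_finsetSum, eval_mul, eval_pow, eval_add, eval_C, eval_X] at h
  exact h

end Abel

theorem sum_mul_eq_of_upper_sums {α R : Type*} [Fintype α] [Semiring R] (r : α → α → Prop)
    (a₀ : α) (mu f g : α → R) (hmin : ∀ a, r a a₀ ↔ a = a₀) (h0 : mu a₀ = 1)
    (hrec : ∀ b, b ≠ a₀ → ∑ a ∈ univ.filter (fun a => r a b), mu a = 0)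
    (hfg : ∀ a, ∑ b ∈ univ.filter (fun b => r a b), g b = f a) :
    ∑ a, mu a * f a = g a₀ := by
  have hdelta : ∀ b, ∑ a ∈ univ.filter (fun a => r a b), mu a = if b = a₀ then 1 else 0 := by
    intro b
    split_ifs with hb
    · subst hb
      rw [sum_filter]
      simp_rw [hmin]
      simp [h0]
    · exact hrec b hb
  calc ∑ a, mu a * f a = ∑ a, ∑ b, if r a b then mu a * g b else 0 := by
        simp_rw [← hfg, mul_sum, sum_filter]
    _ = ∑ b, (∑ a ∈ univ.filter (fun a => r a b), mu a) * g b := by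
        rw [sum_comm]
        simp_rw [sum_mul, sum_filter]
    _ = g a₀ := by
        simp_rw [hdelta, ite_mul, one_mul, zero_mul, sum_ite_eq', if_pos (mem_univ _)]

theorem negE_injective {n : ℕ} : Function.Injective (negE (n := n)) :=
  fun x y h => by simpa [Prod.ext_iff] using h

namespace PtdPartBeta

variable {n : ℕ}

def pointedIdx (π : PtdPartBeta n) : Finset (Fin n) :=
  univ.filter fun i => π.1 (i, false) = some (i, false)

theorem eq_some_self_iff (π : PtdPartBeta n) (p : Fin n × Bool) :
    π.1 p = some p ↔ p.1 ∈ pointedIdx π := by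
  obtain ⟨i, _ | _⟩ := p
  · simp [pointedIdx]
  · change π.1 (negE (i, false)) = some (negE (i, false)) ↔ _
    rw [π.2.2, ← Option.map_some, (Option.map_injective negE_injective).eq_iff]
    simp [pointedIdx]

theorem mem_pointedIdx_of_eq_some (π : PtdPartBeta n) {x q : Fin n × Bool}
    (h : π.1 x = some q) : q.1 ∈ pointedIdx π :=
  (eq_some_self_iff π q).1 (π.2.1 x q h)

theorem pairs_eq_card_pointedIdx (π : PtdPartBeta n) : pairs π.1 = (pointedIdx π).card := by
  have h : univ.filter (fun x => π.1 x = some x) = pointedIdx π ×ˢ univ := by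
    ext p
    simp [eq_some_self_iff]
  rw [pairs, h, card_product, card_univ, Fintype.card_bool, Nat.mul_div_cancel _ two_pos]

theorem pointedIdx_subset_of_le {π b : PtdPartBeta n} (h : le π b) :
    pointedIdx b ⊆ pointedIdx π := by
  intro i hi
  simp only [pointedIdx, mem_filter, mem_univ, true_and] at hi ⊢
  exact h.2.2 _ hi

/-- An element `b ≥ π` with `pointedIdx b = I` is determined by its values at the positive
representatives `(i, false)` of the pointed pairs of `π`; `codeSet π I i` is the set of
allowed values at `(i, false)`. -/
def codeSet (π : PtdPartBeta n) (I : Finset (Fin n)) (i : Fin n) :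
    Finset (Option (Fin n × Bool)) :=
  if i ∈ I then {some (i, false)} else if i ∈ pointedIdx π then (I ×ˢ univ).insertNone else {none}

def restrictIdx (π b : PtdPartBeta n) (i : Fin n) : Option (Fin n × Bool) :=
  if i ∈ pointedIdx π then b.1 (i, false) else none

/-- `(q.1, p.2 ^^ q.2)` is `q` or `negE q` according to the sign of the pointed element `p`. -/
def extendFun (π : PtdPartBeta n) (h : Fin n → Option (Fin n × Bool)) :
    Fin n × Bool → Option (Fin n × Bool) :=
  fun x => (π.1 x).bind fun p => (h p.1).map fun q => (q.1, p.2 ^^ q.2)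

theorem extendFun_negE (π : PtdPartBeta n) (h : Fin n → Option (Fin n × Bool))
    (x : Fin n × Bool) : extendFun π h (negE x) = (extendFun π h x).map negE := by
  simp only [extendFun, π.2.2 x]
  cases π.1 x with
  | none => rfl
  | some p =>
    simp only [Option.map_some, Option.bind_some, Option.map_map]
    congr 1
    funext q
    cases p.2 <;> simp [negE]

section Extend

variable {π : PtdPartBeta n} {I : Finset (Fin n)} {h : Fin n → Option (Fin n × Bool)}

theorem fst_mem_of_mem_codeSet {i : Fin n} {o : Option (Fin n × Bool)} {q : Fin n × Bool}
    (ho : o ∈ codeSet π I i) (hq : q ∈ o) : q.1 ∈ I := by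
  unfold codeSet at ho
  split_ifs at ho with hiI hiπ
  · obtain rfl : o = some (i, false) := mem_singleton.mp ho
    obtain rfl := Option.mem_some_iff.mp hq
    exact hiI
  · exact (mem_product.mp (mem_insertNone.mp ho q hq)).1
  · obtain rfl : o = none := mem_singleton.mp ho
    simp at hq

theorem fst_mem_of_extendFun_eq_some (hh : ∀ i, h i ∈ codeSet π I i) {x q : Fin n × Bool}
    (hx : extendFun π h x = some q) : q.1 ∈ I := by
  obtain ⟨p, -, hq⟩ := Option.bind_eq_some_iff.mp hx
  obtain ⟨q', hq', rfl⟩ := Option.map_eq_some_iff.mp hq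
  exact fst_mem_of_mem_codeSet (q := q') (hh p.1) hq'

theorem extendFun_of_fst_mem (hI : I ⊆ pointedIdx π) (hh : ∀ i, h i ∈ codeSet π I i)
    {q : Fin n × Bool} (hq : q.1 ∈ I) : extendFun π h q = some q := by
  have hπq : π.1 q = some q := (eq_some_self_iff π q).2 (hI hq)
  have hhq : h q.1 = some (q.1, false) := by
    simpa [codeSet, hq] using hh q.1
  simp [extendFun, hπq, hhq]

def extend (π : PtdPartBeta n) (h : Fin n → Option (Fin n × Bool)) (hI : I ⊆ pointedIdx π)
    (hh : ∀ i, h i ∈ codeSet π I i) : PtdPartBeta n :=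
  ⟨extendFun π h, fun _ _ hx => extendFun_of_fst_mem hI hh (fst_mem_of_extendFun_eq_some hh hx),
    extendFun_negE π h⟩

theorem le_extend (hI : I ⊆ pointedIdx π) (hh : ∀ i, h i ∈ codeSet π I i) :
    le π (extend π h hI hh) := by
  refine ⟨fun x hx => by simp [extend, extendFun, hx], fun x p hx => ?_,
    fun p hp => (eq_some_self_iff π p).2 (hI (fst_mem_of_extendFun_eq_some hh hp))⟩
  simp [extend, extendFun, hx, π.2.1 x p hx]

theorem pointedIdx_extend (hI : I ⊆ pointedIdx π) (hh : ∀ i, h i ∈ codeSet π I i) :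
    pointedIdx (extend π h hI hh) = I := by
  ext i
  simp only [pointedIdx, mem_filter, mem_univ, true_and]
  exact ⟨fst_mem_of_extendFun_eq_some hh, extendFun_of_fst_mem hI hh (q := (i, false))⟩

theorem restrictIdx_extend (hI : I ⊆ pointedIdx π) (hh : ∀ i, h i ∈ codeSet π I i) :
    restrictIdx π (extend π h hI hh) = h := by
  funext i
  unfold restrictIdx
  split_ifs with hi
  · have hπi : π.1 (i, false) = some (i, false) := (eq_some_self_iff π _).2 hi
    simp [extend, extendFun, hπi]
  · have hhi := hh i
    have hiI : i ∉ I := fun hiI => hi (hI hiI)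
    simp only [codeSet, hi, hiI, if_false, mem_singleton] at hhi
    exact hhi.symm

end Extend

theorem restrictIdx_mem_codeSet {π b : PtdPartBeta n} (hle : le π b) (i : Fin n) :
    restrictIdx π b i ∈ codeSet π (pointedIdx b) i := by
  unfold restrictIdx codeSet
  by_cases hib : i ∈ pointedIdx b
  · have hbi : b.1 (i, false) = some (i, false) := (eq_some_self_iff b _).2 hib
    simp [hib, pointedIdx_subset_of_le hle hib, hbi]
  · by_cases hiπ : i ∈ pointedIdx π
    · simp only [hib, hiπ, if_true, if_false]
      exact mem_insertNone.mpr fun q hq =>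
        mem_product.mpr ⟨mem_pointedIdx_of_eq_some b hq, mem_univ _⟩
    · simp [hib, hiπ]

theorem extendFun_restrictIdx {π b : PtdPartBeta n} (hle : le π b) :
    extendFun π (restrictIdx π b) = b.1 := by
  funext x
  unfold extendFun
  cases hx : π.1 x with
  | none => exact (hle.1 x hx).symm
  | some p =>
    have hp : p.1 ∈ pointedIdx π := mem_pointedIdx_of_eq_some π hx
    rw [hle.2.1 x p hx]
    obtain ⟨i, _ | _⟩ := p
    · simp [restrictIdx, hp]
    · have hneg := b.2.2 (i, false)
      simp only [negE, Bool.not_false] at hneg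
      simp [restrictIdx, hp, hneg]

theorem card_codeSet (π : PtdPartBeta n) (I : Finset (Fin n)) (i : Fin n) :
    (codeSet π I i).card = if i ∈ pointedIdx π \ I then 2 * I.card + 1 else 1 := by
  unfold codeSet
  by_cases hiI : i ∈ I
  · simp [hiI]
  · by_cases hiπ : i ∈ pointedIdx π
    · simp [hiI, hiπ, mul_comm]
    · simp [hiI, hiπ]

theorem card_filter_le_pointedIdx_eq (π : PtdPartBeta n) {I : Finset (Fin n)}
    (hI : I ⊆ pointedIdx π) :
    ((univ.filter fun b => le π b).filter fun b => pointedIdx b = I).card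
      = (2 * I.card + 1) ^ ((pointedIdx π).card - I.card) := by
  calc _ = (Fintype.piFinset (codeSet π I)).card := by
        refine card_bij' (fun b _ => restrictIdx π b)
          (fun h hh => extend π h hI (Fintype.mem_piFinset.mp hh)) ?_ ?_ ?_ ?_
        · intro b hb
          obtain ⟨hle, rfl⟩ := by simpa using hb
          exact Fintype.mem_piFinset.mpr (restrictIdx_mem_codeSet hle)
        · intro h hh
          simp [le_extend, pointedIdx_extend]
        · intro b hb
          exact Subtype.ext (extendFun_restrictIdx (by simpa using hb : le π b ∧ _).1)
        · intro h _
          exact restrictIdx_extend hI _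
    _ = ∏ i, (codeSet π I i).card := Fintype.card_piFinset _
    _ = (2 * I.card + 1) ^ ((pointedIdx π).card - I.card) := by
        simp_rw [card_codeSet π I]
        rw [prod_ite_mem, univ_inter, prod_const, card_sdiff_of_subset hI]

theorem sum_filter_le_pairs {M : Type*} [AddCommMonoid M] (π : PtdPartBeta n) (F : ℕ → M) :
    ∑ b ∈ univ.filter (fun b => le π b), F (pairs b.1)
      = ∑ I ∈ (pointedIdx π).powerset,
          (2 * I.card + 1) ^ ((pointedIdx π).card - I.card) • F I.card := by
  rw [← sum_fiberwise_of_maps_to (g := pointedIdx) (t := (pointedIdx π).powerset)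
    fun b hb => mem_powerset.mpr (pointedIdx_subset_of_le (mem_filter.mp hb).2)]
  refine sum_congr rfl fun I hI => ?_
  rw [← card_filter_le_pointedIdx_eq π (mem_powerset.mp hI), ← sum_const]
  refine sum_congr rfl fun b hb => ?_
  rw [pairs_eq_card_pointedIdx, (mem_filter.mp hb).2]

theorem sum_filter_le_abelCoeff {R : Type*} [CommRing R] [IsAddTorsionFree R]
    (π : PtdPartBeta n) (x : R) :
    ∑ b ∈ univ.filter (fun b => le π b), abelCoeff (x - 1) 2 (pairs b.1) = x ^ pairs π.1 := by
  set k := (pointedIdx π).card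
  rw [sum_filter_le_pairs, sum_powerset_apply_card
    (fun j => (2 * j + 1) ^ (k - j) • abelCoeff (x - 1) 2 j), pairs_eq_card_pointedIdx]
  calc _ = ∑ j ∈ range (k + 1), k.choose j * abelCoeff (x - 1) 2 j * (1 + j * 2) ^ (k - j) := by
        refine sum_congr rfl fun j _ => ?_
        simp only [nsmul_eq_mul]
        push_cast
        ring
    _ = x ^ k := by rw [sum_choose_mul_abelCoeff, add_sub_cancel]

theorem le_bot_iff (a : PtdPartBeta n) : le a (bot n) ↔ a = bot n := by
  refine ⟨fun h => Subtype.ext (funext fun x => h.2.2 x rfl), ?_⟩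
  rintro rfl
  exact ⟨fun x hx => by simp [bot] at hx, fun x p hp => by simp_all [bot], fun _ _ => rfl⟩

theorem pairs_bot : pairs (bot n).1 = n := by
  rw [pairs_eq_card_pointedIdx]
  simp [pointedIdx, bot]

theorem pairs_eq_zero_iff (π : PtdPartBeta n) : pairs π.1 = 0 ↔ π = top n := by
  rw [pairs_eq_card_pointedIdx, card_eq_zero]
  constructor
  · intro h
    refine Subtype.ext (funext fun x => Option.eq_none_iff_forall_ne_some.mpr fun q hq => ?_)
    simpa [h] using mem_pointedIdx_of_eq_some π hq
  · rintro rfl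
    simp [pointedIdx, top]

theorem sum_mul_zero_pow_pairs {R : Type*} [Semiring R] (w : PtdPartBeta n → R) :
    ∑ π, w π * 0 ^ pairs π.1 = w (top n) := by
  rw [sum_eq_single (top n) (fun π _ hπ => by rw [zero_pow (mt (pairs_eq_zero_iff π).1 hπ),
    mul_zero]) (fun h => absurd (mem_univ _) h), (pairs_eq_zero_iff _).2 rfl, pow_zero, mul_one]

end PtdPartBeta

/-- The characteristic polynomial of `Π^β_n` is `(x-1)(x-(2n+1))^(n-1)`, with constant
term (= Möbius number of the bounded poset) `(-1)^n·(2n+1)^(n-1)`.  Here `mu` is the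
Möbius function `μ(0̂,·)`, characterized by its defining recurrence; the rank of `π` is
`n` minus its number of pairs of opposite non-zero blocks, and the top rank is `n`. -/
theorem stmt11 (n : ℕ) (hn : 1 ≤ n) (mu : PtdPartBeta n → ℤ)
    (h0 : mu (PtdPartBeta.bot n) = 1)
    (hrec : ∀ b : PtdPartBeta n, b ≠ PtdPartBeta.bot n →
      ∑ a ∈ univ.filter (fun a : PtdPartBeta n => PtdPartBeta.le a b), mu a = 0) :
    (∀ x : ℤ, ∑ π : PtdPartBeta n, mu π * x ^ (PtdPartBeta.pairs π.1)
        = (x - 1) * (x - (2 * (n : ℤ) + 1)) ^ (n - 1)) ∧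
    mu (PtdPartBeta.top n) = (-1) ^ n * (2 * (n : ℤ) + 1) ^ (n - 1) := by
  have hchar : ∀ x : ℤ, ∑ π : PtdPartBeta n, mu π * x ^ (PtdPartBeta.pairs π.1)
      = (x - 1) * (x - (2 * (n : ℤ) + 1)) ^ (n - 1) := by
    intro x
    rw [sum_mul_eq_of_upper_sums PtdPartBeta.le (PtdPartBeta.bot n) mu _
      (fun b => abelCoeff (x - 1) 2 (PtdPartBeta.pairs b.1)) PtdPartBeta.le_bot_iff h0 hrec
      (fun π => PtdPartBeta.sum_filter_le_abelCoeff π x), PtdPartBeta.pairs_bot, abelCoeff,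
      if_neg (by omega)]
    ring
  refine ⟨hchar, ?_⟩
  obtain ⟨m, rfl⟩ := Nat.exists_eq_add_of_le' hn
  rw [← PtdPartBeta.sum_mul_zero_pow_pairs mu, hchar, Nat.add_sub_cancel, zero_sub, zero_sub,
    neg_pow]
  ring
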